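/- Let k ≥ 3, let W be a real k × (k−1) matrix whose columns form an orthonormal basis of the zero-sum hyperplane {x ∈ ℝ^k : ∑_j x_j = 0}, and let Φ be a real (k−1) × k matrix such that Φ·W is invertible. Then for every J ∈ {1,…,k} and ε ∈ {+1,−1}, the full PEEL pipeline is lossless on the signed 1-sparse report s = ε·e_J: writing s̃ = N(s) for the z-score normalization, one has W·(ΦW)⁻¹·Φ·s̃ = s̃, and applying the restore operator R (unique maximum-amplitude coordinate with its sign) gives R(W·(ΦW)⁻¹·Φ·N(ε·e_J)) = ε·e_J. -/

import Mathlib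

open Matrix

/-- Coordinate mean of a vector in `ℝ^k`. -/
noncomputable def coordMean {k : ℕ} (x : Fin k → ℝ) : ℝ :=
  (∑ i, x i) / k

/-- Population standard deviation of the coordinates of a vector in `ℝ^k`. -/
noncomputable def coordStd {k : ℕ} (x : Fin k → ℝ) : ℝ :=
  Real.sqrt ((∑ i, (x i - coordMean x) ^ 2) / k)

/-- Per-vector z-score normalization, `N(x)_j = (x_j - μ(x)) / σ(x)`. -/
noncomputable def zscore {k : ℕ} (x : Fin k → ℝ) : Fin k → ℝ :=
  fun j => (x j - coordMean x) / coordStd x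

/-- An index of maximal absolute value of a vector in `ℝ^k`, `k ≠ 0`. -/
noncomputable def argmaxAbs {k : ℕ} [NeZero k] (v : Fin k → ℝ) : Fin k :=
  (Finset.exists_max_image Finset.univ (fun j => |v j|) Finset.univ_nonempty).choose

/-- PEEL's restore operator: the signed standard basis vector at the coordinate of
maximal absolute value, `R(v) = sign(v_{argmax_j |v_j|}) • e_{argmax_j |v_j|}`. -/
noncomputable def restore {k : ℕ} [NeZero k] (v : Fin k → ℝ) : Fin k → ℝ :=
  fun j => Real.sign (v (argmaxAbs v)) * (if j = argmaxAbs v then 1 else 0)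

lemma argmaxAbs_spec {k : ℕ} [NeZero k] (v : Fin k → ℝ) (j : Fin k) :
    |v j| ≤ |v (argmaxAbs v)| := by
  have h := (Finset.exists_max_image Finset.univ (fun j => |v j|)
    Finset.univ_nonempty).choose_spec
  exact h.2 j (Finset.mem_univ j)


/-- **The full PEEL pipeline is lossless on benign signed 1-sparse reports.**
Let `k ≥ 3`, let the columns of `W` be an orthonormal basis of the zero-sum hyperplane
(`Wᵀ W = 1` and `range (W.mulVec) = {x | ∑ j, x j = 0}`), and let `Φ W` be invertible.
Then for every `J` and `ε ∈ {+1,-1}`, with `s̃ = N(ε • e_J)` one has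
`W (ΦW)⁻¹ Φ s̃ = s̃`, and the restore operator recovers `R(W (ΦW)⁻¹ Φ N(ε • e_J)) = ε • e_J`. -/
theorem peel_closed_loop_lossless
    (k : ℕ) [NeZero k] (hk : 3 ≤ k)
    (W : Matrix (Fin k) (Fin (k - 1)) ℝ)
    (hW_orth : Wᵀ * W = 1)
    (hW_range : Set.range W.mulVec = {x : Fin k → ℝ | ∑ j, x j = 0})
    (Φ : Matrix (Fin (k - 1)) (Fin k) ℝ)
    (hΘ : IsUnit (Φ * W).det)
    (J : Fin k) (ε : ℝ) (hε : ε = 1 ∨ ε = -1) :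
    W.mulVec ((Φ * W)⁻¹.mulVec
        (Φ.mulVec (zscore (fun j => ε * (if j = J then 1 else 0)))))
      = zscore (fun j => ε * (if j = J then 1 else 0)) ∧
    restore (W.mulVec ((Φ * W)⁻¹.mulVec
        (Φ.mulVec (zscore (fun j => ε * (if j = J then 1 else 0))))))
      = fun j => ε * (if j = J then 1 else 0) := by
  set s : Fin k → ℝ := fun j => ε * (if j = J then 1 else 0) with hs
  have hεabs : |ε| = 1 := by rcases hε with h | h <;> simp [h]
  have hεne : ε ≠ 0 := by rcases hε with h | h <;> simp [h]
  have hkR : (0:ℝ) < (k:ℝ) := by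
    have : 0 < k := Nat.pos_of_ne_zero (NeZero.ne k)
    exact_mod_cast this
  have hsum : ∑ i, s i = ε := by simp [hs]
  have hμ : coordMean s = ε / k := by rw [coordMean, hsum]
  -- value at J and off J
  have hsJv : s J = ε := by simp [hs]
  have hsJ : s J - coordMean s = ε * ((k:ℝ) - 1) / k := by
    rw [hsJv, hμ]; field_simp
  have hsoff : ∀ j, j ≠ J → s j - coordMean s = -(ε / k) := by
    intro j hj
    have : s j = 0 := by simp [hs, hj]
    rw [this, hμ]; ring
  -- positivity of std
  have hterm_pos : 0 < (s J - coordMean s) ^ 2 := by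
    rw [hsJ]
    have h1 : (0:ℝ) < (k:ℝ) - 1 := by
      have : (3:ℝ) ≤ (k:ℝ) := by exact_mod_cast hk
      linarith
    positivity
  have hS_pos : 0 < ∑ i, (s i - coordMean s) ^ 2 := by
    apply Finset.sum_pos' (fun i _ => sq_nonneg _)
    exact ⟨J, Finset.mem_univ J, hterm_pos⟩
  have hσ : 0 < coordStd s := by
    rw [coordStd]
    apply Real.sqrt_pos.mpr
    positivity
  -- sum of zscore is zero
  have hzsum : ∑ i, zscore s i = 0 := by
    have : ∑ i, (s i - coordMean s) = 0 := by
      rw [Finset.sum_sub_distrib, hsum, Finset.sum_const, hμ]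
      simp
      field_simp
      ring
    simp only [zscore]
    rw [← Finset.sum_div, this, zero_div]
  -- membership in range
  have hmem : zscore s ∈ Set.range W.mulVec := by
    rw [hW_range]; exact hzsum
  obtain ⟨y, hy⟩ := hmem
  have part1 : W.mulVec ((Φ * W)⁻¹.mulVec (Φ.mulVec (zscore s))) = zscore s := by
    have hinv : (Φ * W)⁻¹ * (Φ * W) = 1 := Matrix.nonsing_inv_mul _ hΘ
    rw [← hy]
    simp only [mulVec_mulVec]
    rw [hinv, Matrix.mul_one]
  refine ⟨part1, ?_⟩
  rw [part1]
  -- argmax is J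
  have hvJ : |zscore s J| = ((k:ℝ) - 1) / k / coordStd s := by
    rw [zscore, hsJ, abs_div, abs_of_pos hσ, abs_div, abs_mul, hεabs, one_mul,
      abs_of_pos hkR, abs_of_pos (by
        have : (3:ℝ) ≤ (k:ℝ) := by exact_mod_cast hk
        linarith : (0:ℝ) < (k:ℝ) - 1)]
  have hvoff : ∀ j, j ≠ J → |zscore s j| = 1 / k / coordStd s := by
    intro j hj
    rw [zscore, hsoff j hj, abs_div, abs_of_pos hσ, abs_neg, abs_div, hεabs,
      abs_of_pos hkR]
  have hargmax : argmaxAbs (zscore s) = J := by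
    by_contra h
    have h1 := argmaxAbs_spec (zscore s) J
    rw [hvJ, hvoff _ h] at h1
    have h3 : (3:ℝ) ≤ (k:ℝ) := by exact_mod_cast hk
    have h2 := (div_le_div_iff_of_pos_right hσ).mp h1
    have h4 := (div_le_div_iff_of_pos_right hkR).mp h2
    linarith
  have hsign : Real.sign (zscore s J) = ε := by
    have hfac : 0 < ((k:ℝ) - 1) / k / coordStd s := by
      have h3 : (3:ℝ) ≤ (k:ℝ) := by exact_mod_cast hk
      have hk1 : (0:ℝ) < (k:ℝ) - 1 := by linarith
      exact div_pos (div_pos hk1 hkR) hσ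
    have hval : zscore s J = ε * (((k:ℝ) - 1) / k / coordStd s) := by
      rw [zscore, hsJ]; ring
    rcases hε with h | h
    · rw [hval, h, one_mul, Real.sign_of_pos hfac]
    · rw [hval, h]
      have hneg : (-1:ℝ) * (((k:ℝ) - 1) / k / coordStd s) < 0 := by linarith
      rw [Real.sign_of_neg hneg]
  funext j
  simp only [restore]
  rw [hargmax, hsign]
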